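/- The increase in optimal growth rate of a stock market due to causal side information is upper bounded by directed information: W*(X^n || Y^n) − W*(X^n) ≤ I(Y^n → X^n). -/

import Mathlib

open scoped Classical
open Real

noncomputable section

variable {α β : Type} [Fintype α] [DecidableEq α] [Fintype β] [DecidableEq β]

/-- Probability of the event `E` under the joint pmf `p` of `(X^n, Y^n)`. -/
def pr {n : ℕ} (p : (Fin n → α) → (Fin n → β) → ℝ)
    (E : (Fin n → α) → (Fin n → β) → Prop) : ℝ :=
  ∑ x, ∑ y, if E x y then p x y else 0

/-- `p` is a probability mass function on pairs of sequences. -/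
def IsPmf {n : ℕ} (p : (Fin n → α) → (Fin n → β) → ℝ) : Prop :=
  (∀ x y, 0 ≤ p x y) ∧ ∑ x, ∑ y, p x y = 1

/-- The conditional pmf `p(x_i | x^{i-1}, y^{i-d})` evaluated along `(x, y)`. -/
def condX {n : ℕ} (p : (Fin n → α) → (Fin n → β) → ℝ) (d : ℕ) (i : Fin n)
    (x : Fin n → α) (y : Fin n → β) : ℝ :=
  pr p (fun x' y' => (∀ j, j < i → x' j = x j) ∧ x' i = x i ∧
      ∀ j : Fin n, (j : ℕ) + d ≤ (i : ℕ) → y' j = y j) /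
  pr p (fun x' y' => (∀ j, j < i → x' j = x j) ∧
      ∀ j : Fin n, (j : ℕ) + d ≤ (i : ℕ) → y' j = y j)

/-- The conditional pmf `p(y_i | y^{i-1}, x^{i-d})` evaluated along `(x, y)`. -/
def condY {n : ℕ} (p : (Fin n → α) → (Fin n → β) → ℝ) (d : ℕ) (i : Fin n)
    (x : Fin n → α) (y : Fin n → β) : ℝ :=
  pr p (fun x' y' => (∀ j, j < i → y' j = y j) ∧ y' i = y i ∧
      ∀ j : Fin n, (j : ℕ) + d ≤ (i : ℕ) → x' j = x j) /
  pr p (fun x' y' => (∀ j, j < i → y' j = y j) ∧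
      ∀ j : Fin n, (j : ℕ) + d ≤ (i : ℕ) → x' j = x j)

/-- Causally conditioned pmf `p(x^n || y^{n-d}) = ∏ᵢ p(xᵢ | x^{i-1}, y^{i-d})`. -/
def ccX {n : ℕ} (p : (Fin n → α) → (Fin n → β) → ℝ) (d : ℕ)
    (x : Fin n → α) (y : Fin n → β) : ℝ :=
  ∏ i, condX p d i x y

/-- Causally conditioned pmf `p(y^n || x^{n-d}) = ∏ᵢ p(yᵢ | y^{i-1}, x^{i-d})`. -/
def ccY {n : ℕ} (p : (Fin n → α) → (Fin n → β) → ℝ) (d : ℕ)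
    (x : Fin n → α) (y : Fin n → β) : ℝ :=
  ∏ i, condY p d i x y

/-- Marginal pmf of `X^n`. -/
def pX {n : ℕ} (p : (Fin n → α) → (Fin n → β) → ℝ) (x : Fin n → α) : ℝ := ∑ y, p x y

/-- Marginal pmf of `Y^n`. -/
def pY {n : ℕ} (p : (Fin n → α) → (Fin n → β) → ℝ) (y : Fin n → β) : ℝ := ∑ x, p x y

/-- `H(X^n)` in bits. -/
def HX {n : ℕ} (p : (Fin n → α) → (Fin n → β) → ℝ) : ℝ :=
  -(∑ x, ∑ y, p x y * Real.logb 2 (pX p x))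

/-- `H(Y^n)` in bits. -/
def HY {n : ℕ} (p : (Fin n → α) → (Fin n → β) → ℝ) : ℝ :=
  -(∑ x, ∑ y, p x y * Real.logb 2 (pY p y))

/-- Joint entropy `H(X^n, Y^n)` in bits. -/
def Hjoint {n : ℕ} (p : (Fin n → α) → (Fin n → β) → ℝ) : ℝ :=
  -(∑ x, ∑ y, p x y * Real.logb 2 (p x y))

/-- Conditional entropy `H(X_i | X^{i-1}, Y^{i-d})` in bits. -/
def HcondX {n : ℕ} (p : (Fin n → α) → (Fin n → β) → ℝ) (d : ℕ) (i : Fin n) : ℝ :=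
  -(∑ x, ∑ y, p x y * Real.logb 2 (condX p d i x y))

/-- Conditional entropy `H(Y_i | Y^{i-1}, X^{i-d})` in bits. -/
def HcondY {n : ℕ} (p : (Fin n → α) → (Fin n → β) → ℝ) (d : ℕ) (i : Fin n) : ℝ :=
  -(∑ x, ∑ y, p x y * Real.logb 2 (condY p d i x y))

/-- Causally conditional entropy `H(X^n || Y^{n-d}) = Σᵢ H(Xᵢ | X^{i-1}, Y^{i-d})`. -/
def HccX {n : ℕ} (p : (Fin n → α) → (Fin n → β) → ℝ) (d : ℕ) : ℝ := ∑ i, HcondX p d i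

/-- Causally conditional entropy `H(Y^n || X^{n-d})`. -/
def HccY {n : ℕ} (p : (Fin n → α) → (Fin n → β) → ℝ) (d : ℕ) : ℝ := ∑ i, HcondY p d i

/-- Conditional mutual information `I(Y^i; X_i | X^{i-1})`
(as the expectation of `log (p(xᵢ|x^{i-1},y^i) / p(xᵢ|x^{i-1}))`;
note `condX p n` is `p(xᵢ|x^{i-1})`, conditioning on no `y`'s at all). -/
def cmiYX {n : ℕ} (p : (Fin n → α) → (Fin n → β) → ℝ) (i : Fin n) : ℝ :=
  ∑ x, ∑ y, p x y * Real.logb 2 (condX p 0 i x y / condX p n i x y)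

/-- Conditional mutual information `I(X^i; Y_i | Y^{i-1})`. -/
def cmiXY {n : ℕ} (p : (Fin n → α) → (Fin n → β) → ℝ) (i : Fin n) : ℝ :=
  ∑ x, ∑ y, p x y * Real.logb 2 (condY p 0 i x y / condY p n i x y)

/-- Directed information `I(Y^n → X^n) = Σᵢ I(Y^i; X_i | X^{i-1})`. -/
def dirYX {n : ℕ} (p : (Fin n → α) → (Fin n → β) → ℝ) : ℝ := ∑ i, cmiYX p i

/-- Directed information `I(X^n → Y^n) = Σᵢ I(X^i; Y_i | Y^{i-1})`. -/
def dirXY {n : ℕ} (p : (Fin n → α) → (Fin n → β) → ℝ) : ℝ := ∑ i, cmiXY p i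

/-- Directed information `I(Y^{n-1} → X^n) = Σᵢ I(Y^{i-1}; X_i | X^{i-1})`
(the term for `i = 1` vanishes, so we may sum over all `i`). -/
def dirY1X {n : ℕ} (p : (Fin n → α) → (Fin n → β) → ℝ) : ℝ :=
  ∑ i, ∑ x, ∑ y, p x y * Real.logb 2 (condX p 1 i x y / condX p n i x y)

/-- Mutual information `I(X^n; Y^n)` in bits. -/
def miXY {n : ℕ} (p : (Fin n → α) → (Fin n → β) → ℝ) : ℝ :=
  ∑ x, ∑ y, p x y * Real.logb 2 (p x y / (pX p x * pY p y))

/-- A causal (nonanticipating) portfolio strategy on `m` stocks: `b i x y` is the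
portfolio used at time `i`; it lies in the simplex and depends only on the history
`(x^{i-1}, y^i)`. -/
def IsCausalPortfolio {n m : ℕ}
    (b : Fin n → (Fin n → α) → (Fin n → β) → (Fin m → ℝ)) : Prop :=
  (∀ i x y k, 0 ≤ b i x y k) ∧ (∀ i x y, ∑ k, b i x y k = 1) ∧
  (∀ i x x' y y', (∀ j, j < i → x j = x' j) → (∀ j, j ≤ i → y j = y' j) →
    b i x y = b i x' y')

/-- The growth `W(X^n||Y^n) = E[log ∏ᵢ b(x^{i-1},y^i)ᵀ xᵢ]`, where the stock vector
at time `i` is `v (x i) ∈ ℝ^m`. -/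
def stockW {n m : ℕ} (p : (Fin n → α) → (Fin n → β) → ℝ) (v : α → Fin m → ℝ)
    (b : Fin n → (Fin n → α) → (Fin n → β) → (Fin m → ℝ)) : ℝ :=
  ∑ x, ∑ y, p x y * Real.logb 2 (∏ i, ∑ k, b i x y k * v (x i) k)

end

/-!
Given a causal strategy `b` that uses the side information, let `b̂` invest at time `i` the
average of the portfolios `b_i(x^{i-1}, y^i)` over `y`, weighted by `p(y^i ‖ x^{i-1})` times the
wealth `b` has accumulated before time `i`. By induction on `i`, the wealth of `b̂` on `x^n`
dominates `∑_y p(y^n ‖ x^{n-1}) S_b(x^n, y^n)`. Since `p(x^n, y^n) = p(x^n ‖ y^n) p(y^n ‖ x^{n-1})`,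
the directed information is `E log [p(X^n, Y^n) / (p(Y^n ‖ X^{n-1}) p(X^n))]`, and Gibbs'
inequality for the subprobability `S_b(x^n, y^n) p(y^n ‖ x^{n-1}) p(x^n) / S_b̂(x^n)` gives
`W(b) ≤ I(Y^n → X^n) + W(b̂)`. Nonnegativity of directed information, needed when no strategy
qualifies, is the same inequality in a market with a single riskless asset.
-/

section General

variable {ι γ : Type*} [Fintype ι] [DecidableEq ι] [Fintype γ]

lemma sum_sum_update (i : ι) (f : (ι → γ) → ℝ) :
    ∑ y, ∑ c, f (Function.update y i c) = Fintype.card γ * ∑ y, f y := by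
  let e : Equiv.Perm ((ι → γ) × γ) :=
    Function.Involutive.toPerm (fun z => (Function.update z.1 i z.2, z.1 i)) fun z => by simp
  calc ∑ y, ∑ c, f (Function.update y i c) = ∑ z, f (e z).1 := (Fintype.sum_prod_type' _).symm
    _ = ∑ z : (ι → γ) × γ, f z.1 := Equiv.sum_comp e fun z => f z.1
    _ = _ := by simp [Fintype.sum_prod_type, Finset.mul_sum]

lemma card_mul_sum_mul_le_sum (i : ι) {F G : (ι → γ) → ℝ} (hF : ∀ y, 0 ≤ F y)
    (hF_update : ∀ y c, F (Function.update y i c) = F y)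
    (hG : ∀ y, ∑ c, G (Function.update y i c) ≤ 1) :
    Fintype.card γ * ∑ y, F y * G y ≤ ∑ y, F y := by
  rw [← sum_sum_update i]
  refine Finset.sum_le_sum fun y _ => ?_
  simp only [hF_update, ← Finset.mul_sum]
  exact mul_le_of_le_one_right (hF y) (hG y)

end General

lemma mul_logb_div_le {p a : ℝ} (hp : 0 ≤ p) (ha : 0 ≤ a) (hpa : 0 < p → 0 < a) :
    p * logb 2 (a / p) ≤ (a - p) / log 2 := by
  rcases hp.eq_or_lt with rfl | hp
  · simpa using div_nonneg ha (log_nonneg one_le_two)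
  · rw [logb, ← mul_div_assoc, div_le_div_iff_of_pos_right (log_pos one_lt_two)]
    calc p * log (a / p) ≤ p * (a / p - 1) := by
          gcongr; exact log_le_sub_one_of_pos (div_pos (hpa hp) hp)
      _ = a - p := by field_simp

lemma sum_sum_mul_logb_div_nonpos {κ ι : Type*} [Fintype κ] [Fintype ι] {p a : κ → ι → ℝ}
    (hp : ∀ x y, 0 ≤ p x y) (hp_sum : ∑ x, ∑ y, p x y = 1) (ha : ∀ x y, 0 ≤ a x y)
    (hpa : ∀ x y, 0 < p x y → 0 < a x y) (ha_sum : ∑ x, ∑ y, a x y ≤ 1) :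
    ∑ x, ∑ y, p x y * logb 2 (a x y / p x y) ≤ 0 := by
  calc ∑ x, ∑ y, p x y * logb 2 (a x y / p x y) ≤ ∑ x, ∑ y, (a x y - p x y) / log 2 :=
        Finset.sum_le_sum fun x _ => Finset.sum_le_sum fun y _ =>
          mul_logb_div_le (hp x y) (ha x y) (hpa x y)
    _ = (∑ x, ∑ y, a x y - 1) / log 2 := by
        simp only [← Finset.sum_div, Finset.sum_sub_distrib, hp_sum]
    _ ≤ 0 := div_nonpos_of_nonpos_of_nonneg (by linarith) (log_nonneg one_le_two)

lemma logb_mul_div_div {S q T p : ℝ} (hS : 0 < S) (hq : 0 < q) (hT : 0 < T) (hp : 0 < p) :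
    logb 2 (S * q / T / p) = logb 2 S - logb 2 (p / q) - logb 2 T := by
  rw [logb_div (by positivity) hp.ne', logb_div (by positivity) hT.ne', logb_mul hS.ne' hq.ne',
    logb_div hp.ne' hq.ne']
  ring

lemma prod_fin_div_eq_div {n : ℕ} {f : ℕ → ℝ} (hf : ∀ t ≤ n, f t ≠ 0) :
    ∏ i : Fin n, f (i + 1) / f i = f n / f 0 := by
  rw [Fin.prod_univ_eq_prod_range (fun t => f (t + 1) / f t)]
  induction n with
  | zero => simp [div_self (hf 0 le_rfl)]
  | succ n ih =>
    rw [Finset.prod_range_succ, ih fun t ht => hf t (by omega),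
      mul_comm, div_mul_div_cancel₀ (hf n (by omega))]

lemma forall_val_lt_succ_iff {n : ℕ} {P : Fin n → Prop} (i : Fin n) :
    (∀ j : Fin n, (j : ℕ) < i + 1 → P j) ↔ (∀ j : Fin n, (j : ℕ) < i → P j) ∧ P i := by
  refine ⟨fun h => ⟨fun j hj => h j (by omega), h i (by omega)⟩, fun ⟨h, hi⟩ j hj => ?_⟩
  rcases Nat.lt_succ_iff_lt_or_eq.mp hj with hj | hj
  · exact h j hj
  · rwa [Fin.ext hj]

lemma forall_val_add_le_iff {n : ℕ} {P : Fin n → Prop} (d : ℕ) (i : Fin n) :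
    (∀ j : Fin n, (j : ℕ) + d ≤ i → P j) ↔ ∀ j : Fin n, (j : ℕ) < i + 1 - d → P j :=
  forall_congr' fun _ => imp_congr_left (by omega)

lemma sSup_sub_sSup_le {A B : Set ℝ} {c : ℝ} (hc : 0 ≤ c) (hBA : B ⊆ A) (hB : BddAbove B)
    (h : ∀ a ∈ A, ∃ b ∈ B, a ≤ c + b) : sSup A - sSup B ≤ c := by
  rcases A.eq_empty_or_nonempty with rfl | hA
  · simp [Set.subset_empty_iff.mp hBA, hc]
  · rw [sub_le_iff_le_add]
    refine csSup_le hA fun a ha => ?_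
    obtain ⟨b, hb, hab⟩ := h a ha
    linarith [le_csSup hB hb]

section Probability

variable {α β : Type} [Fintype α] [Fintype β] {n : ℕ} {p : (Fin n → α) → (Fin n → β) → ℝ}

lemma pr_nonneg (hp : ∀ x y, 0 ≤ p x y) (E : (Fin n → α) → (Fin n → β) → Prop) :
    0 ≤ pr p E :=
  Finset.sum_nonneg fun x _ => Finset.sum_nonneg fun y _ => ite_nonneg (hp x y) le_rfl

lemma pr_congr {E E' : (Fin n → α) → (Fin n → β) → Prop} (h : ∀ x y, E x y ↔ E' x y) :
    pr p E = pr p E' := by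
  obtain rfl : E = E' := funext₂ fun x y => propext (h x y)
  rfl

lemma le_pr (hp : ∀ x y, 0 ≤ p x y) {E : (Fin n → α) → (Fin n → β) → Prop} {x y} (h : E x y) :
    p x y ≤ pr p E := by
  rw [pr, ← Fintype.sum_prod_type' (f := fun x y => if E x y then p x y else 0)]
  calc p x y = if E x y then p x y else 0 := (if_pos h).symm
    _ ≤ _ := Finset.single_le_sum (f := fun z => if E z.1 z.2 then p z.1 z.2 else 0)
        (fun z _ => ite_nonneg (hp z.1 z.2) le_rfl) (Finset.mem_univ (x, y))

lemma sum_pr_and_eq (E : (Fin n → α) → (Fin n → β) → Prop) (i : Fin n) :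
    ∑ c, pr p (fun x' y' => E x' y' ∧ y' i = c) = pr p E := by
  unfold pr
  rw [Finset.sum_comm]
  refine Finset.sum_congr rfl fun x _ => ?_
  rw [Finset.sum_comm]
  refine Finset.sum_congr rfl fun y _ => ?_
  by_cases hE : E x y <;> simp [hE]

/-- `prefixPr p x y s t` is `P(X^s = x^s, Y^t = y^t)`, prefixes of length `s` and `t`. -/
noncomputable def prefixPr (p : (Fin n → α) → (Fin n → β) → ℝ) (x : Fin n → α) (y : Fin n → β)
    (s t : ℕ) : ℝ :=
  pr p fun x' y' =>
    (∀ j : Fin n, (j : ℕ) < s → x' j = x j) ∧ ∀ j : Fin n, (j : ℕ) < t → y' j = y j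

lemma condY_nonneg (hp : ∀ x y, 0 ≤ p x y) (d : ℕ) (i : Fin n) (x : Fin n → α) (y : Fin n → β) :
    0 ≤ condY p d i x y :=
  div_nonneg (pr_nonneg hp _) (pr_nonneg hp _)

variable {x : Fin n → α} {y : Fin n → β}

lemma le_prefixPr (hp : ∀ x y, 0 ≤ p x y) (s t : ℕ) : p x y ≤ prefixPr p x y s t :=
  le_pr hp ⟨fun _ _ => rfl, fun _ _ => rfl⟩

lemma prefixPr_zero_zero (hp : IsPmf p) : prefixPr p x y 0 0 = 1 := by
  simpa [prefixPr, pr] using hp.2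

lemma prefixPr_n_zero : prefixPr p x y n 0 = pX p x := by
  simp [prefixPr, pr, pX, ← funext_iff]

lemma prefixPr_n_n : prefixPr p x y n n = p x y := by
  simp [prefixPr, pr, ← funext_iff, ite_and]

lemma prefixPr_congr {x' : Fin n → α} {y' : Fin n → β} {s t : ℕ}
    (hx : ∀ j : Fin n, (j : ℕ) < s → x j = x' j) (hy : ∀ j : Fin n, (j : ℕ) < t → y j = y' j) :
    prefixPr p x y s t = prefixPr p x' y' s t :=
  pr_congr fun _ _ => and_congr (forall₂_congr fun j hj => by rw [hx j hj])
    (forall₂_congr fun j hj => by rw [hy j hj])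

lemma sum_prefixPr_update (s : ℕ) (i : Fin n) :
    ∑ c, prefixPr p x (Function.update y i c) s (i + 1) = prefixPr p x y s i := by
  simp only [prefixPr]
  rw [← sum_pr_and_eq _ i]
  refine Finset.sum_congr rfl fun c _ => pr_congr fun x' y' => ?_
  rw [forall_val_lt_succ_iff, Function.update_self, and_assoc]
  refine and_congr_right' (and_congr_left' (forall₂_congr fun j hj => ?_))
  rw [Function.update_of_ne (Fin.ne_of_val_ne hj.ne)]

lemma condX_eq (d : ℕ) (i : Fin n) :
    condX p d i x y = prefixPr p x y (i + 1) (i + 1 - d) / prefixPr p x y i (i + 1 - d) := by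
  unfold condX prefixPr
  congr 1 <;> refine pr_congr fun x' y' => ?_ <;>
    simp only [Fin.lt_def, forall_val_lt_succ_iff, forall_val_add_le_iff, and_assoc]

lemma condY_eq (d : ℕ) (i : Fin n) :
    condY p d i x y = prefixPr p x y (i + 1 - d) (i + 1) / prefixPr p x y (i + 1 - d) i := by
  unfold condY prefixPr
  congr 1 <;> refine pr_congr fun x' y' => ?_ <;>
    (simp only [Fin.lt_def, forall_val_lt_succ_iff, forall_val_add_le_iff]; tauto)

lemma condX_pos (hp : ∀ x y, 0 ≤ p x y) (h : 0 < p x y) (d : ℕ) (i : Fin n) :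
    0 < condX p d i x y := by
  rw [condX_eq]
  exact div_pos (h.trans_le (le_prefixPr hp _ _)) (h.trans_le (le_prefixPr hp _ _))

lemma condY_pos (hp : ∀ x y, 0 ≤ p x y) (h : 0 < p x y) (d : ℕ) (i : Fin n) :
    0 < condY p d i x y := by
  rw [condY_eq]
  exact div_pos (h.trans_le (le_prefixPr hp _ _)) (h.trans_le (le_prefixPr hp _ _))

lemma condY_one_congr {i : Fin n} {x' : Fin n → α} {y' : Fin n → β}
    (hx : ∀ j : Fin n, (j : ℕ) < i → x j = x' j) (hy : ∀ j : Fin n, (j : ℕ) ≤ i → y j = y' j) :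
    condY p 1 i x y = condY p 1 i x' y' := by
  simp only [condY_eq, Nat.add_sub_cancel]
  rw [prefixPr_congr hx fun j hj => hy j (by omega), prefixPr_congr hx fun j hj => hy j hj.le]

lemma sum_condY_one_update_le (i : Fin n) :
    ∑ c, condY p 1 i x (Function.update y i c) ≤ 1 := by
  have hden : ∀ c, prefixPr p x (Function.update y i c) i i = prefixPr p x y i i := fun c =>
    prefixPr_congr (fun _ _ => rfl) fun j hj => Function.update_of_ne (Fin.ne_of_val_ne hj.ne) c y
  simp only [condY_eq, Nat.add_sub_cancel, hden, ← Finset.sum_div, sum_prefixPr_update]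
  exact div_self_le_one _

lemma ccX_n_eq_pX (hp : IsPmf p) (h : 0 < p x y) : ccX p n x y = pX p x := by
  calc ccX p n x y = ∏ i : Fin n, prefixPr p x y (i + 1) 0 / prefixPr p x y i 0 := by
        refine Finset.prod_congr rfl fun i _ => ?_
        rw [condX_eq, show (i : ℕ) + 1 - n = 0 by omega]
    _ = prefixPr p x y n 0 / prefixPr p x y 0 0 := prod_fin_div_eq_div
        (f := fun t => prefixPr p x y t 0) fun _ _ => (h.trans_le (le_prefixPr hp.1 _ _)).ne'
    _ = pX p x := by rw [prefixPr_n_zero, prefixPr_zero_zero hp, div_one]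

lemma ccX_zero_mul_ccY_one (hp : IsPmf p) (h : 0 < p x y) :
    ccX p 0 x y * ccY p 1 x y = p x y := by
  have hpos : ∀ s t, prefixPr p x y s t ≠ 0 := fun _ _ => (h.trans_le (le_prefixPr hp.1 _ _)).ne'
  calc ccX p 0 x y * ccY p 1 x y = ∏ i : Fin n, condX p 0 i x y * condY p 1 i x y :=
        Finset.prod_mul_distrib.symm
    _ = ∏ i : Fin n, prefixPr p x y (i + 1) (i + 1) / prefixPr p x y i i := by
        refine Finset.prod_congr rfl fun i _ => ?_
        rw [condX_eq, condY_eq, Nat.sub_zero, Nat.add_sub_cancel, div_mul_div_cancel₀ (hpos _ _)]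
    _ = prefixPr p x y n n / prefixPr p x y 0 0 :=
        prod_fin_div_eq_div (f := fun t => prefixPr p x y t t) fun _ _ => hpos _ _
    _ = p x y := by rw [prefixPr_n_n, prefixPr_zero_zero hp, div_one]

lemma dirYX_eq (hp : IsPmf p) :
    dirYX p = ∑ x, ∑ y, p x y * logb 2 (p x y / (ccY p 1 x y * pX p x)) := by
  unfold dirYX cmiYX
  rw [Finset.sum_comm]
  refine Finset.sum_congr rfl fun x _ => ?_
  rw [Finset.sum_comm]
  refine Finset.sum_congr rfl fun y _ => ?_
  rcases (hp.1 x y).eq_or_lt with h | h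
  · simp [← h]
  rw [← Finset.mul_sum, ← logb_prod _ _ fun i _ => (div_pos (condX_pos hp.1 h 0 i)
    (condX_pos hp.1 h n i)).ne', Finset.prod_div_distrib]
  change p x y * logb 2 (ccX p 0 x y / ccX p n x y) = _
  have hccY : ccY p 1 x y ≠ 0 := (Finset.prod_pos fun i _ => condY_pos hp.1 h 1 i).ne'
  rw [ccX_n_eq_pX hp h, ← ccX_zero_mul_ccY_one hp h, mul_comm (ccY p 1 x y),
    mul_div_mul_right _ _ hccY]

end Probability

section PartialProd

variable {n : ℕ}

def partialProd (g : Fin n → ℝ) (t : ℕ) : ℝ :=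
  ∏ j ∈ Finset.univ.filter fun j : Fin n => (j : ℕ) < t, g j

lemma partialProd_zero (g : Fin n → ℝ) : partialProd g 0 = 1 := by
  simp [partialProd]

lemma partialProd_n (g : Fin n → ℝ) : partialProd g n = ∏ j, g j := by
  simp [partialProd]

lemma partialProd_succ (g : Fin n → ℝ) (i : Fin n) :
    partialProd g (i + 1) = g i * partialProd g i := by
  have : Finset.univ.filter (fun j : Fin n => (j : ℕ) < i + 1) =
      insert i (Finset.univ.filter fun j : Fin n => (j : ℕ) < i) := by
    ext j
    simp only [Finset.mem_filter, Finset.mem_univ, true_and, Finset.mem_insert, Fin.ext_iff]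
    omega
  rw [partialProd, this, Finset.prod_insert (by simp)]
  rfl

lemma partialProd_nonneg {g : Fin n → ℝ} (hg : ∀ j, 0 ≤ g j) (t : ℕ) : 0 ≤ partialProd g t :=
  Finset.prod_nonneg fun j _ => hg j

lemma partialProd_congr {g g' : Fin n → ℝ} {t : ℕ} (h : ∀ j : Fin n, (j : ℕ) < t → g j = g' j) :
    partialProd g t = partialProd g' t :=
  Finset.prod_congr rfl fun j hj => h j (Finset.mem_filter.mp hj).2

end PartialProd

section Strategy

variable {α β : Type} {n m : ℕ}

abbrev Strategy (α β : Type) (n m : ℕ) : Type := Fin n → (Fin n → α) → (Fin n → β) → Fin m → ℝ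

def wealthFactor (v : α → Fin m → ℝ) (b : Strategy α β n m) (x : Fin n → α) (y : Fin n → β)
    (j : Fin n) : ℝ :=
  ∑ k, b j x y k * v (x j) k

lemma wealthFactor_nonneg {v : α → Fin m → ℝ} {b : Strategy α β n m} (hv : ∀ a k, 0 ≤ v a k)
    (hb : ∀ i x y k, 0 ≤ b i x y k) (x : Fin n → α) (y : Fin n → β) (j : Fin n) :
    0 ≤ wealthFactor v b x y j :=
  Finset.sum_nonneg fun k _ => mul_nonneg (hb j x y k) (hv (x j) k)

end Strategy

section Portfolio

variable {α β : Type} [Fintype α] [Fintype β] {n m : ℕ} {p : (Fin n → α) → (Fin n → β) → ℝ}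

lemma ccY_nonneg (hp : ∀ x y, 0 ≤ p x y) (x : Fin n → α) (y : Fin n → β) : 0 ≤ ccY p 1 x y :=
  Finset.prod_nonneg fun i _ => condY_nonneg hp 1 i x y

lemma pos_of_sum_ccY_mul_le (hp : ∀ x y, 0 ≤ p x y) {S : (Fin n → α) → (Fin n → β) → ℝ}
    (hS : ∀ x y, 0 ≤ S x y) {T : ℝ} {x : Fin n → α} {y : Fin n → β}
    (hle : ∑ y', ccY p 1 x y' * S x y' ≤ T) (hpxy : 0 < p x y) (hSxy : 0 < S x y) : 0 < T :=
  calc 0 < ccY p 1 x y * S x y :=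
        mul_pos (Finset.prod_pos fun i _ => condY_pos hp hpxy 1 i) hSxy
    _ ≤ ∑ y', ccY p 1 x y' * S x y' :=
        Finset.single_le_sum (fun y' _ => mul_nonneg (ccY_nonneg hp x y') (hS x y'))
          (Finset.mem_univ y)
    _ ≤ T := hle

lemma sum_mul_logb_le_dirYX_add (hp : IsPmf p) {S : (Fin n → α) → (Fin n → β) → ℝ}
    {T : (Fin n → α) → ℝ} (hS : ∀ x y, 0 ≤ S x y) (hS_pos : ∀ x y, 0 < p x y → 0 < S x y)
    (hle : ∀ x, ∑ y, ccY p 1 x y * S x y ≤ T x) :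
    ∑ x, ∑ y, p x y * logb 2 (S x y) ≤ dirYX p + ∑ x, ∑ y, p x y * logb 2 (T x) := by
  have hpX : ∀ x, 0 ≤ pX p x := fun x => Finset.sum_nonneg fun y _ => hp.1 x y
  have hT : ∀ x, 0 ≤ T x := fun x => (Finset.sum_nonneg fun y _ =>
    mul_nonneg (ccY_nonneg hp.1 x y) (hS x y)).trans (hle x)
  have hpos : ∀ x y, 0 < p x y → 0 < S x y ∧ 0 < ccY p 1 x y * pX p x ∧ 0 < T x :=
    fun x y h => ⟨hS_pos x y h, mul_pos (Finset.prod_pos fun i _ => condY_pos hp.1 h 1 i)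
      (h.trans_le (Finset.single_le_sum (fun y _ => hp.1 x y) (Finset.mem_univ y))),
      pos_of_sum_ccY_mul_le hp.1 hS (hle x) h (hS_pos x y h)⟩
  let a x y := S x y * (ccY p 1 x y * pX p x) / T x
  have ha_sum : ∀ x, ∑ y, a x y ≤ pX p x := fun x => by
    calc ∑ y, a x y = (∑ y, ccY p 1 x y * S x y) / T x * pX p x := by
          simp only [a, ← Finset.sum_div, Finset.sum_mul, div_mul_eq_mul_div]
          congr 1; exact Finset.sum_congr rfl fun y _ => by ring
      _ ≤ 1 * pX p x := by gcongr; exacts [hpX x, div_le_one_of_le₀ (hle x) (hT x)]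
      _ = pX p x := one_mul _
  have hgibbs : ∑ x, ∑ y, p x y * logb 2 (a x y / p x y) ≤ 0 := by
    refine sum_sum_mul_logb_div_nonpos hp.1 hp.2 (fun x y => ?_) (fun x y h => ?_)
      ((Finset.sum_le_sum fun x _ => ha_sum x).trans_eq hp.2)
    · exact div_nonneg (mul_nonneg (hS x y) (mul_nonneg (ccY_nonneg hp.1 x y) (hpX x))) (hT x)
    · obtain ⟨h₁, h₂, h₃⟩ := hpos x y h
      exact div_pos (mul_pos h₁ h₂) h₃
  have hsplit : ∀ x y, p x y * logb 2 (a x y / p x y) = p x y * logb 2 (S x y) -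
      p x y * logb 2 (p x y / (ccY p 1 x y * pX p x)) - p x y * logb 2 (T x) := fun x y => by
    rcases (hp.1 x y).eq_or_lt with h | h
    · simp [← h]
    obtain ⟨h₁, h₂, h₃⟩ := hpos x y h
    rw [logb_mul_div_div h₁ h₂ h₃ h]
    ring
  simp only [hsplit, Finset.sum_sub_distrib] at hgibbs
  rw [dirYX_eq hp]
  linarith

/-- `p(y^t ‖ x^{t-1}) · S_t(x, y)`, with `S_t` the wealth of `b` after the first `t` periods. -/
noncomputable def weightedWealth (p : (Fin n → α) → (Fin n → β) → ℝ) (v : α → Fin m → ℝ)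
    (b : Strategy α β n m) (x : Fin n → α) (t : ℕ) (y : Fin n → β) : ℝ :=
  partialProd (fun j => condY p 1 j x y) t * partialProd (wealthFactor v b x y) t

noncomputable def portfolioWeight (p : (Fin n → α) → (Fin n → β) → ℝ) (v : α → Fin m → ℝ)
    (b : Strategy α β n m) (i : Fin n) (x : Fin n → α) (y : Fin n → β) : ℝ :=
  weightedWealth p v b x i y * condY p 1 i x y

/-- At time `i`, the average of the portfolios `b i x y` over `y`, weighted by the causally
conditioned probability of the side information up to time `i` times the wealth before time `i`;
the fallback `b i x y₀` matters only where all weights vanish. -/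
noncomputable def averagedStrategy (p : (Fin n → α) → (Fin n → β) → ℝ) (v : α → Fin m → ℝ)
    (b : Strategy α β n m) (y₀ : Fin n → β) : Strategy α β n m := fun i x _ k =>
  if ∑ y, portfolioWeight p v b i x y = 0 then b i x y₀ k
  else (∑ y, portfolioWeight p v b i x y * b i x y k) / ∑ y, portfolioWeight p v b i x y

variable {v : α → Fin m → ℝ} {b : Strategy α β n m}

lemma weightedWealth_nonneg (hp : ∀ x y, 0 ≤ p x y) (hv : ∀ a k, 0 ≤ v a k)
    (hb : ∀ i x y k, 0 ≤ b i x y k) (x : Fin n → α) (t : ℕ) (y : Fin n → β) :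
    0 ≤ weightedWealth p v b x t y :=
  mul_nonneg (partialProd_nonneg (fun j => condY_nonneg hp 1 j x y) t)
    (partialProd_nonneg (wealthFactor_nonneg hv hb x y) t)

lemma portfolioWeight_nonneg (hp : ∀ x y, 0 ≤ p x y) (hv : ∀ a k, 0 ≤ v a k)
    (hb : ∀ i x y k, 0 ≤ b i x y k) (i : Fin n) (x : Fin n → α) (y : Fin n → β) :
    0 ≤ portfolioWeight p v b i x y :=
  mul_nonneg (weightedWealth_nonneg hp hv hb x i y) (condY_nonneg hp 1 i x y)

lemma portfolioWeight_mul_wealthFactor (i : Fin n) (x : Fin n → α) (y : Fin n → β) :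
    portfolioWeight p v b i x y * wealthFactor v b x y i = weightedWealth p v b x (i + 1) y := by
  simp only [portfolioWeight, weightedWealth, partialProd_succ]
  ring

lemma weightedWealth_update (hb : IsCausalPortfolio b) (x : Fin n → α) (i : Fin n)
    (y : Fin n → β) (c : β) :
    weightedWealth p v b x i (Function.update y i c) = weightedWealth p v b x i y := by
  have hy : ∀ j : Fin n, (j : ℕ) < i → ∀ j' ≤ j, Function.update y i c j' = y j' :=
    fun j hj j' hj' => Function.update_of_ne (Fin.ne_of_val_ne (by omega)) c y
  unfold weightedWealth wealthFactor
  congr 1 <;> refine partialProd_congr fun j hj => ?_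
  · exact condY_one_congr (fun _ _ => rfl) fun j' hj' => hy j hj j' (Fin.le_def.mpr hj')
  · rw [hb.2.2 j x x _ y (fun _ _ => rfl) (hy j hj)]

lemma portfolioWeight_congr (hb : IsCausalPortfolio b) {i : Fin n} {x x' : Fin n → α}
    (hx : ∀ j, j < i → x j = x' j) (y : Fin n → β) :
    portfolioWeight p v b i x y = portfolioWeight p v b i x' y := by
  unfold portfolioWeight weightedWealth wealthFactor
  rw [condY_one_congr hx fun _ _ => rfl]
  congr 2 <;> refine partialProd_congr fun j hj => ?_
  · exact condY_one_congr (fun j' hj' => hx j' (by omega)) fun _ _ => rfl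
  · rw [hb.2.2 j x x' y y (fun j' hj' => hx j' (by omega)) fun _ _ => rfl, hx j hj]

lemma averagedStrategy_isCausalPortfolio (hp : ∀ x y, 0 ≤ p x y) (hv : ∀ a k, 0 ≤ v a k)
    (hb : IsCausalPortfolio b) (y₀ : Fin n → β) :
    IsCausalPortfolio (averagedStrategy p v b y₀) := by
  have hw := portfolioWeight_nonneg hp hv hb.1
  refine ⟨fun i x y k => ?_, fun i x y => ?_, fun i x x' y y' hx _ => ?_⟩
  · unfold averagedStrategy
    split_ifs
    · exact hb.1 i x y₀ k
    · exact div_nonneg (Finset.sum_nonneg fun y _ => mul_nonneg (hw i x y) (hb.1 i x y k))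
        (Finset.sum_nonneg fun y _ => hw i x y)
  · unfold averagedStrategy
    split_ifs with h
    · exact hb.2.1 i x y₀
    · rw [← Finset.sum_div, Finset.sum_comm]
      simp only [← Finset.mul_sum, hb.2.1, mul_one]
      exact div_self h
  · have hbx : ∀ y, b i x y = b i x' y := fun y => hb.2.2 i x x' y y hx fun _ _ => rfl
    funext k
    simp only [averagedStrategy, hbx, portfolioWeight_congr hb hx]

lemma sum_weightedWealth_succ (hp : ∀ x y, 0 ≤ p x y) (hv : ∀ a k, 0 ≤ v a k)
    (hb : ∀ i x y k, 0 ≤ b i x y k) (y₀ : Fin n → β) (x : Fin n → α) (i : Fin n) :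
    ∑ y, weightedWealth p v b x (i + 1) y =
      wealthFactor v (averagedStrategy p v b y₀) x y₀ i * ∑ y, portfolioWeight p v b i x y := by
  simp only [← portfolioWeight_mul_wealthFactor]
  by_cases hD : ∑ y, portfolioWeight p v b i x y = 0
  · have hzero := (Finset.sum_eq_zero_iff_of_nonneg fun y _ =>
      portfolioWeight_nonneg hp hv hb i x y).mp hD
    simp [hzero]
  · calc ∑ y, portfolioWeight p v b i x y * wealthFactor v b x y i
          = ∑ k, (∑ y, portfolioWeight p v b i x y * b i x y k) * v (x i) k := by
          simp only [wealthFactor, Finset.mul_sum, Finset.sum_mul, mul_assoc]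
          exact Finset.sum_comm
      _ = _ := by
          simp only [wealthFactor, averagedStrategy, if_neg hD, Finset.sum_mul]
          refine Finset.sum_congr rfl fun k _ => ?_
          rw [div_mul_eq_mul_div, div_mul_cancel₀ _ hD, Finset.sum_mul]

/-- The sums run over whole sequences `y`, so the symbols `y_t, …, y_{n-1}`, on which the
summand does not depend, contribute the factor `|β| ^ (n - t)`. -/
lemma card_pow_mul_sum_weightedWealth_le (hp : ∀ x y, 0 ≤ p x y) (hv : ∀ a k, 0 ≤ v a k)
    (hb : IsCausalPortfolio b) (y₀ : Fin n → β) (x : Fin n → α) {t : ℕ} (ht : t ≤ n) :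
    (Fintype.card β : ℝ) ^ t * ∑ y, weightedWealth p v b x t y ≤
      (Fintype.card β : ℝ) ^ n *
        partialProd (wealthFactor v (averagedStrategy p v b y₀) x y₀) t := by
  induction t with
  | zero => simp [weightedWealth, partialProd_zero]
  | succ t ih =>
    let i : Fin n := ⟨t, ht⟩
    have hmarg : Fintype.card β * ∑ y, portfolioWeight p v b i x y ≤
        ∑ y, weightedWealth p v b x t y :=
      card_mul_sum_mul_le_sum i (weightedWealth_nonneg hp hv hb.1 x t)
        (weightedWealth_update hb x i) fun y => sum_condY_one_update_le i
    have hwf := wealthFactor_nonneg hv (averagedStrategy_isCausalPortfolio hp hv hb y₀).1 x y₀ i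
    calc (Fintype.card β : ℝ) ^ (t + 1) * ∑ y, weightedWealth p v b x (t + 1) y
        = Fintype.card β ^ t * (Fintype.card β * ∑ y, portfolioWeight p v b i x y) *
            wealthFactor v (averagedStrategy p v b y₀) x y₀ i := by
          rw [sum_weightedWealth_succ hp hv hb.1 y₀ x i]
          ring
      _ ≤ Fintype.card β ^ t * (∑ y, weightedWealth p v b x t y) *
            wealthFactor v (averagedStrategy p v b y₀) x y₀ i := by gcongr
      _ ≤ Fintype.card β ^ n * partialProd (wealthFactor v (averagedStrategy p v b y₀) x y₀) t *
            wealthFactor v (averagedStrategy p v b y₀) x y₀ i :=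
          mul_le_mul_of_nonneg_right (ih (by omega)) hwf
      _ = _ := by
          rw [show t + 1 = (i : ℕ) + 1 from rfl, partialProd_succ]
          ring

lemma sum_ccY_mul_prod_wealthFactor_le (hp : IsPmf p) (hv : ∀ a k, 0 ≤ v a k)
    (hb : IsCausalPortfolio b) (y₀ : Fin n → β) (x : Fin n → α) :
    ∑ y, ccY p 1 x y * ∏ j, wealthFactor v b x y j ≤
      ∏ j, wealthFactor v (averagedStrategy p v b y₀) x y₀ j := by
  have h := card_pow_mul_sum_weightedWealth_le hp.1 hv hb y₀ x le_rfl
  simp only [weightedWealth, partialProd_n] at h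
  have hcard : (0 : ℝ) < Fintype.card β ^ n := by
    have : 0 < Fintype.card (Fin n → β) := Fintype.card_pos_iff.mpr ⟨y₀⟩
    rw [Fintype.card_fun, Fintype.card_fin] at this
    exact_mod_cast this
  exact le_of_mul_le_mul_left h hcard

lemma nonempty_of_isPmf (hp : IsPmf p) : Nonempty (Fin n → β) := by
  by_contra h
  rw [not_nonempty_iff] at h
  simpa using hp.2

theorem exists_sideInfoFree_portfolio (hp : IsPmf p) (hv : ∀ a k, 0 ≤ v a k)
    (hb : IsCausalPortfolio b) (hpos : ∀ x y, 0 < p x y → 0 < ∏ i, ∑ k, b i x y k * v (x i) k) :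
    ∃ b' : Strategy α β n m, IsCausalPortfolio b' ∧ (∀ i x y y', b' i x y = b' i x y') ∧
      (∀ x y, 0 < p x y → 0 < ∏ i, ∑ k, b' i x y k * v (x i) k) ∧
      stockW p v b ≤ dirYX p + stockW p v b' := by
  obtain ⟨y₀⟩ := nonempty_of_isPmf hp
  have hS : ∀ x y, 0 ≤ ∏ j, wealthFactor v b x y j := fun x y =>
    Finset.prod_nonneg fun j _ => wealthFactor_nonneg hv hb.1 x y j
  have hle := sum_ccY_mul_prod_wealthFactor_le hp hv hb y₀
  refine ⟨averagedStrategy p v b y₀, averagedStrategy_isCausalPortfolio hp.1 hv hb y₀,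
    fun _ _ _ _ => rfl, fun x y h => ?_, ?_⟩
  · exact pos_of_sum_ccY_mul_le hp.1 hS (hle x) h (hpos x y h)
  · have hW : stockW p v (averagedStrategy p v b y₀) = ∑ x, ∑ y, p x y *
        logb 2 (∏ j, wealthFactor v (averagedStrategy p v b y₀) x y₀ j) := rfl
    rw [hW]
    exact sum_mul_logb_le_dirYX_add hp hS hpos hle

lemma dirYX_nonneg (hp : IsPmf p) : 0 ≤ dirYX p := by
  -- side information is worthless in a market with a single riskless asset
  have hzero : ∀ b : Strategy α β n 1, IsCausalPortfolio b → stockW p (fun _ _ => 1) b = 0 :=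
    fun b hb => by
      simp only [stockW, mul_one, hb.2.1, Finset.prod_const_one, logb_one, mul_zero,
        Finset.sum_const_zero]
  have hone : IsCausalPortfolio (fun _ _ _ _ => 1 : Strategy α β n 1) :=
    ⟨fun _ _ _ _ => zero_le_one, fun _ _ _ => by simp, fun _ _ _ _ _ _ _ => rfl⟩
  obtain ⟨b', hb', -, -, hle⟩ :=
    exists_sideInfoFree_portfolio hp (fun _ _ => zero_le_one) hone fun _ _ _ => by simp
  linarith [hzero _ hone, hzero b' hb']

lemma stockW_le_sum_logb_prod (hp : ∀ x y, 0 ≤ p x y) (hv : ∀ a k, 0 ≤ v a k)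
    (hb : IsCausalPortfolio b) (hpos : ∀ x y, 0 < p x y → 0 < ∏ i, ∑ k, b i x y k * v (x i) k) :
    stockW p v b ≤ ∑ x, ∑ y, p x y * logb 2 (∏ i, ∑ k, v (x i) k) := by
  refine Finset.sum_le_sum fun x _ => Finset.sum_le_sum fun y _ => ?_
  rcases (hp x y).eq_or_lt with h | h
  · simp [← h]
  refine mul_le_mul_of_nonneg_left (logb_le_logb_of_le one_lt_two (hpos x y h) ?_) h.le
  refine Finset.prod_le_prod (fun i _ => wealthFactor_nonneg hv hb.1 x y i)
    fun i _ => Finset.sum_le_sum fun k _ => mul_le_of_le_one_left (hv _ _) ?_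
  exact hb.2.1 i x y ▸ Finset.single_le_sum (fun k _ => hb.1 i x y k) (Finset.mem_univ k)

end Portfolio

variable {α β : Type} [Fintype α] [DecidableEq α] [Fintype β] [DecidableEq β]

/-- The suprema range over strategies whose wealth is positive on the support of `p`, i.e. whose
expected log-wealth is finite. -/
theorem stock_market_growth_bound {n m : ℕ}
    (p : (Fin n → α) → (Fin n → β) → ℝ) (hp : IsPmf p)
    (v : α → Fin m → ℝ) (hv : ∀ a k, 0 ≤ v a k) :
    sSup {w | ∃ b, IsCausalPortfolio b ∧
        (∀ x y, 0 < p x y → 0 < ∏ i, ∑ k, b i x y k * v (x i) k) ∧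
        w = stockW p v b} -
      sSup {w | ∃ b, IsCausalPortfolio b ∧ (∀ i x y y', b i x y = b i x y') ∧
        (∀ x y, 0 < p x y → 0 < ∏ i, ∑ k, b i x y k * v (x i) k) ∧
        w = stockW p v b} ≤
    dirYX p := by
  refine sSup_sub_sSup_le (dirYX_nonneg hp) ?_
    ⟨∑ x, ∑ y, p x y * logb 2 (∏ i, ∑ k, v (x i) k), ?_⟩ ?_
  · rintro w ⟨b, hb, -, hpos, rfl⟩
    exact ⟨b, hb, hpos, rfl⟩
  · rintro w ⟨b, hb, -, hpos, rfl⟩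
    exact stockW_le_sum_logb_prod hp.1 hv hb hpos
  · rintro w ⟨b, hb, hpos, rfl⟩
    obtain ⟨b', hb', hb'_indep, hpos', hle⟩ := exists_sideInfoFree_portfolio hp hv hb hpos
    exact ⟨_, ⟨b', hb', hb'_indep, hpos', rfl⟩, hle⟩
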